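/- arXiv:2604.10428 — 6 statements merged into one kernel-verified Lean document; each statement's English description precedes it below -/
import Mathlib

section
/- Let η1, η2 ∈ [0,1] and let (A_i)_{i∈I} be a finite family of N×N complex matrices with Σ_i A_i† A_i = 1 (Kraus operators of a quantum channel C on ℂ^N). If (1/N) Σ_{k∈ZMod N} Σ_i |(A_i F)_{k,k}|² ≥ 1 − η1 (i.e. C ∈ S1(η1)) and (1/N) Σ_{k∈ZMod N} Σ_i |(F A_i)_{k,k}|² ≥ 1 − η2 (i.e. C ∈ S2(η2)), then Σ_i |Tr(A_i F)/N|² ≥ 1 − (η1 + η2) (i.e. C ∈ S3(η1+η2)). -/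
open scoped BigOperators ComplexConjugate
open Finset Matrix

/-- The `N × N` quantum Fourier transform matrix, with entries `F j k = ω^{jk} / √N`,
where `ω = exp(2πi/N)`. -/
noncomputable def QFT (N : ℕ) [NeZero N] : Matrix (ZMod N) (ZMod N) ℂ :=
  fun j k => Complex.exp (2 * (Real.pi : ℂ) * Complex.I * (j.val : ℂ) * (k.val : ℂ) / (N : ℂ))
    / (Real.sqrt N : ℂ)

/-!
Write `B = A F` and let `c_B(d) = ∑_l B_{l,l-d}` be the cyclic diagonal sums of `B`, so that
`c_B(0) = Tr B`. Since `F A = F B F†`, the diagonal of `F A` is `F c_B / √N`, and unitarity of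
`F` gives `∑_k |(F A)_{kk}|² = ‖c_B‖² / N`; so S2 says that the vectors `c_{B_i}` carry almost
all of the mass `N²`. By Cauchy–Schwarz `|c_B(d)|² ≤ N ∑_l |B_{l,l-d}|²`, and summed over `d ≠ 0`
and over the Kraus operators the right side is `N (N - ∑_{i,l} |(B_i)_{ll}|²)`, because
`∑_i ‖B_i‖_F² = Tr (F† F) = N`; S1 makes this at most `N² η1`. What is left at `d = 0`, namely
`∑_i |Tr B_i|²`, is therefore at least `N² (1 - η1 - η2)`.
-/

section Unitary

variable {𝕜 : Type*} [RCLike 𝕜] {n : Type*} [Fintype n]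

lemma star_dotProduct_self_eq_sum_norm_sq (v : n → 𝕜) :
    star v ⬝ᵥ v = ((∑ i, ‖v i‖ ^ 2 : ℝ) : 𝕜) := by
  push_cast
  exact Finset.sum_congr rfl fun i _ => RCLike.conj_mul (v i)

lemma trace_conjTranspose_mul_self_eq_sum_norm_sq {m : Type*} [Fintype m] (B : Matrix m n 𝕜) :
    (Bᴴ * B).trace = ((∑ i, ∑ j, ‖B i j‖ ^ 2 : ℝ) : 𝕜) := by
  rw [← star_vec_dotProduct_vec, star_dotProduct_self_eq_sum_norm_sq, Fintype.sum_prod_type,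
    Finset.sum_comm]
  rfl

variable [DecidableEq n]

lemma sum_norm_sq_mulVec_of_mem_unitaryGroup {U : Matrix n n 𝕜} (hU : U ∈ unitaryGroup n 𝕜)
    (v : n → 𝕜) : ∑ i, ‖(U *ᵥ v) i‖ ^ 2 = ∑ i, ‖v i‖ ^ 2 := by
  apply RCLike.ofReal_injective (K := 𝕜)
  rw [← star_dotProduct_self_eq_sum_norm_sq, ← star_dotProduct_self_eq_sum_norm_sq, star_mulVec,
    ← dotProduct_mulVec, mulVec_mulVec, ← star_eq_conjTranspose,
    (mem_unitaryGroup_iff').mp hU, one_mulVec]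

lemma sum_sum_sum_norm_sq_mul_eq_card_of_mem_unitaryGroup {I : Type*} [Fintype I]
    {A : I → Matrix n n 𝕜} (hK : ∑ i, (A i)ᴴ * A i = 1) {U : Matrix n n 𝕜}
    (hU : U ∈ unitaryGroup n 𝕜) :
    ∑ i, ∑ l, ∑ m, ‖(A i * U) l m‖ ^ 2 = Fintype.card n := by
  apply RCLike.ofReal_injective (K := 𝕜)
  have hsum : ∑ i, (A i * U)ᴴ * (A i * U) = 1 := by
    simp_rw [conjTranspose_mul, Matrix.mul_assoc, ← Matrix.mul_assoc (A _)ᴴ]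
    rw [← Matrix.mul_sum, ← Matrix.sum_mul, hK, Matrix.one_mul, ← star_eq_conjTranspose,
      (mem_unitaryGroup_iff').mp hU]
  rw [RCLike.ofReal_sum, RCLike.ofReal_natCast, ← trace_one, ← hsum, trace_sum]
  exact Finset.sum_congr rfl fun i _ => (trace_conjTranspose_mul_self_eq_sum_norm_sq _).symm

end Unitary

section CyclicDiag

variable {G : Type*} [AddCommGroup G] [Fintype G]

def cyclicDiagSum {R : Type*} [AddCommMonoid R] (B : Matrix G G R) (d : G) : R :=
  ∑ l, B l (l - d)

lemma cyclicDiagSum_zero {R : Type*} [AddCommMonoid R] (B : Matrix G G R) :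
    cyclicDiagSum B 0 = B.trace := by
  simp only [cyclicDiagSum, sub_zero, trace, diag_apply]

lemma sum_sum_apply_sub {R : Type*} [AddCommMonoid R] (f : G → G → R) :
    ∑ d, ∑ l, f l (l - d) = ∑ l, ∑ m, f l m := by
  rw [Finset.sum_comm]
  exact Finset.sum_congr rfl fun l _ => Fintype.sum_equiv (Equiv.subLeft l) _ _ fun _ => rfl

variable {R : Type*} [SeminormedAddCommGroup R]

lemma norm_cyclicDiagSum_sq_le (B : Matrix G G R) (d : G) :
    ‖cyclicDiagSum B d‖ ^ 2 ≤ Fintype.card G * ∑ l, ‖B l (l - d)‖ ^ 2 :=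
  calc ‖cyclicDiagSum B d‖ ^ 2 ≤ (∑ l, ‖B l (l - d)‖) ^ 2 := by
        gcongr; exact norm_sum_le _ _
    _ ≤ Fintype.card G * ∑ l, ‖B l (l - d)‖ ^ 2 := sq_sum_le_card_mul_sum_sq

lemma sum_norm_cyclicDiagSum_sq_sub_le (B : Matrix G G R) :
    ∑ d, ‖cyclicDiagSum B d‖ ^ 2 - ‖B.trace‖ ^ 2
      ≤ Fintype.card G * (∑ l, ∑ m, ‖B l m‖ ^ 2 - ∑ l, ‖B l l‖ ^ 2) := by
  classical
  have hoff := Finset.sum_le_sum fun d (_ : d ∈ univ.erase 0) => norm_cyclicDiagSum_sq_le B d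
  rw [← Finset.mul_sum, Finset.sum_erase_eq_sub (mem_univ 0),
    Finset.sum_erase_eq_sub (mem_univ 0), cyclicDiagSum_zero,
    sum_sum_apply_sub fun l m => ‖B l m‖ ^ 2] at hoff
  simpa only [sub_zero] using hoff

end CyclicDiag

section QFT

lemma ofReal_sqrt_mul_self_natCast (N : ℕ) : (Real.sqrt N : ℂ) * Real.sqrt N = N := by
  rw [← Complex.ofReal_mul, Real.mul_self_sqrt (Nat.cast_nonneg N), Complex.ofReal_natCast]

variable {N : ℕ} [NeZero N]

lemma QFT_apply (j k : ZMod N) :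
    QFT N j k = ZMod.stdAddChar (j * k) / (Real.sqrt N : ℂ) := by
  have hjk : j * k = ((j.val * k.val : ℕ) : ZMod N) := by simp
  rw [QFT, hjk, ZMod.stdAddChar_apply, ZMod.toCircle_natCast]
  push_cast
  ring_nf

lemma QFT_apply_mul_conj_QFT_apply (j k l m : ZMod N) :
    QFT N j l * conj (QFT N k m) = ZMod.stdAddChar (j * l - k * m) / N := by
  rw [QFT_apply, QFT_apply, map_div₀, Complex.conj_ofReal, ← AddChar.map_neg_eq_conj,
    sub_eq_add_neg, AddChar.map_add_eq_mul, ← ofReal_sqrt_mul_self_natCast]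
  ring

lemma QFT_mem_unitaryGroup : QFT N ∈ unitaryGroup (ZMod N) ℂ := by
  rw [mem_unitaryGroup_iff]
  ext j k
  have hsub : ∀ m, j * m - k * m = m * (j - k) := fun m => by ring
  simp only [mul_apply, star_apply, RCLike.star_def, QFT_apply_mul_conj_QFT_apply, hsub,
    ← Finset.sum_div, AddChar.sum_mulShift _ (ZMod.isPrimitive_stdAddChar N), sub_eq_zero,
    one_apply, ZMod.card]
  split_ifs <;> simp

lemma QFT_mul_mul_conjTranspose_apply_self (B : Matrix (ZMod N) (ZMod N) ℂ) (k : ZMod N) :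
    (QFT N * B * (QFT N)ᴴ) k k = (QFT N *ᵥ cyclicDiagSum B) k / (Real.sqrt N : ℂ) :=
  calc (QFT N * B * (QFT N)ᴴ) k k
      = ∑ l, ∑ m, B l m * (ZMod.stdAddChar (k * l - k * m) / N) := by
        simp only [mul_apply, conjTranspose_apply, RCLike.star_def, Finset.sum_mul]
        rw [Finset.sum_comm]
        refine Finset.sum_congr rfl fun l _ => Finset.sum_congr rfl fun m _ => ?_
        rw [← QFT_apply_mul_conj_QFT_apply]
        ring
    _ = ∑ d, ∑ l, B l (l - d) * (ZMod.stdAddChar (k * d) / N) := by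
        rw [← sum_sum_apply_sub]
        simp only [← mul_sub, sub_sub_cancel]
    _ = (QFT N *ᵥ cyclicDiagSum B) k / (Real.sqrt N : ℂ) := by
        simp only [mulVec, dotProduct, cyclicDiagSum, Finset.mul_sum, Finset.sum_div]
        refine Finset.sum_congr rfl fun d _ => Finset.sum_congr rfl fun l _ => ?_
        rw [QFT_apply, ← ofReal_sqrt_mul_self_natCast]
        ring

lemma sum_norm_sq_QFT_mul_apply_self (A : Matrix (ZMod N) (ZMod N) ℂ) :
    ∑ k, ‖(QFT N * A) k k‖ ^ 2 = (∑ d, ‖cyclicDiagSum (A * QFT N) d‖ ^ 2) / N := by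
  have hA : QFT N * A = QFT N * (A * QFT N) * (QFT N)ᴴ := by
    rw [Matrix.mul_assoc, Matrix.mul_assoc A, ← star_eq_conjTranspose,
      mem_unitaryGroup_iff.mp QFT_mem_unitaryGroup, Matrix.mul_one]
  simp_rw [hA, QFT_mul_mul_conjTranspose_apply_self, norm_div, div_pow, ← Finset.sum_div,
    sum_norm_sq_mulVec_of_mem_unitaryGroup QFT_mem_unitaryGroup, Complex.norm_real,
    Real.norm_eq_abs, sq_abs, Real.sq_sqrt (Nat.cast_nonneg N)]

end QFT

theorem s1_and_s2_implies_s3_general (N : ℕ) [NeZero N] (η1 η2 : ℝ)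
    (I : Type) [Fintype I] (A : I → Matrix (ZMod N) (ZMod N) ℂ)
    (hK : ∑ i : I, (A i)ᴴ * A i = 1)
    (hS1 : (1 / N : ℝ) * ∑ k : ZMod N, ∑ i : I,
      ‖(A i * QFT N) k k‖ ^ 2 ≥ 1 - η1)
    (hS2 : (1 / N : ℝ) * ∑ k : ZMod N, ∑ i : I,
      ‖(QFT N * A i) k k‖ ^ 2 ≥ 1 - η2) :
    ∑ i : I, ‖(A i * QFT N).trace / (N : ℂ)‖ ^ 2 ≥ 1 - (η1 + η2) := by
  have hN : (0 : ℝ) < N := Nat.cast_pos.mpr (NeZero.pos N)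
  have hmass := sum_sum_sum_norm_sq_mul_eq_card_of_mem_unitaryGroup hK QFT_mem_unitaryGroup
  have hoff := Finset.sum_le_sum fun i (_ : i ∈ univ) =>
    sum_norm_cyclicDiagSum_sq_sub_le (A i * QFT N)
  rw [Finset.sum_sub_distrib, ← Finset.mul_sum, Finset.sum_sub_distrib, hmass, ZMod.card] at hoff
  rw [Finset.sum_comm] at hS1 hS2
  simp_rw [sum_norm_sq_QFT_mul_apply_self, ← Finset.sum_div] at hS2
  simp_rw [norm_div, Complex.norm_natCast, div_pow, ← Finset.sum_div]
  rw [ge_iff_le, le_div_iff₀ (pow_pos hN 2)]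
  rw [ge_iff_le, one_div_mul_eq_div, le_div_iff₀ hN] at hS1
  rw [ge_iff_le, one_div_mul_eq_div, div_div, le_div_iff₀ (mul_pos hN hN)] at hS2
  linarith [mul_le_mul_of_nonneg_left hS1 hN.le]

/-- If a quantum channel with Kraus operators `A i` is in `S1(η1)` and `S2(η2)`,
then it is in `S3(η1 + η2)`. -/
theorem s1_and_s2_implies_s3 (N : ℕ) [NeZero N] (η1 η2 : ℝ)
    (hη1 : η1 ∈ Set.Icc (0 : ℝ) 1) (hη2 : η2 ∈ Set.Icc (0 : ℝ) 1)
    (I : Type) [Fintype I] (A : I → Matrix (ZMod N) (ZMod N) ℂ)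
    (hK : ∑ i : I, (A i)ᴴ * A i = 1)
    (hS1 : (1 / N : ℝ) * ∑ k : ZMod N, ∑ i : I,
      ‖(A i * QFT N) k k‖ ^ 2 ≥ 1 - η1)
    (hS2 : (1 / N : ℝ) * ∑ k : ZMod N, ∑ i : I,
      ‖(QFT N * A i) k k‖ ^ 2 ≥ 1 - η2) :
    ∑ i : I, ‖(A i * QFT N).trace / (N : ℂ)‖ ^ 2 ≥ 1 - (η1 + η2) :=
  s1_and_s2_implies_s3_general N η1 η2 I A hK hS1 hS2
end

section
/- Let η ∈ [0,1] and let (A_i)_{i∈I} be a finite family of N×N complex matrices with Σ_i A_i† A_i = 1. If Σ_i |Tr(A_i F)/N|² ≥ 1 − η (i.e. C ∈ S3(η)), then both (1/N) Σ_{k∈ZMod N} Σ_i |(A_i F)_{k,k}|² ≥ 1 − η (C ∈ S1(η)) and (1/N) Σ_{k∈ZMod N} Σ_i |(F A_i)_{k,k}|² ≥ 1 − η (C ∈ S2(η)). -/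
open scoped BigOperators ComplexConjugate
open Finset Matrix

/-! The only input is Cauchy–Schwarz: the squared modulus of the normalized trace of a matrix
is at most the average squared modulus of its diagonal entries. Applied to `A i * F`, and to
`F * A i` (same trace), this turns the `S3` bound into the `S1` and `S2` bounds. -/

section NormalizedTrace

variable {𝕜 n : Type*} [RCLike 𝕜] [Fintype n]

theorem Matrix.norm_trace_div_card_sq_le (B : Matrix n n 𝕜) :
    ‖B.trace / (Fintype.card n : 𝕜)‖ ^ 2 ≤ (1 / Fintype.card n : ℝ) * ∑ k, ‖B k k‖ ^ 2 := by
  have cauchy_schwarz : (∑ k, ‖B k k‖) ^ 2 ≤ Fintype.card n * ∑ k, ‖B k k‖ ^ 2 :=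
    sq_sum_le_card_mul_sum_sq
  rcases (Fintype.card n).eq_zero_or_pos with hn | hn
  · simp [hn]
  rw [norm_div, RCLike.norm_natCast, div_pow, div_le_iff₀ (by positivity)]
  calc ‖B.trace‖ ^ 2 ≤ (∑ k, ‖B k k‖) ^ 2 := by gcongr; exact norm_sum_le _ _
    _ ≤ Fintype.card n * ∑ k, ‖B k k‖ ^ 2 := cauchy_schwarz
    _ = (1 / Fintype.card n : ℝ) * (∑ k, ‖B k k‖ ^ 2) * (Fintype.card n : ℝ) ^ 2 := by
      field_simp

theorem Matrix.sum_norm_trace_div_card_sq_le {ι : Type*} [Fintype ι] (B : ι → Matrix n n 𝕜) :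
    ∑ i, ‖(B i).trace / (Fintype.card n : 𝕜)‖ ^ 2 ≤
      (1 / Fintype.card n : ℝ) * ∑ k, ∑ i, ‖B i k k‖ ^ 2 := by
  rw [sum_comm, mul_sum]
  exact sum_le_sum fun i _ => (B i).norm_trace_div_card_sq_le

end NormalizedTrace

theorem s3_implies_s1_and_s2_general (N : ℕ) [NeZero N] (η : ℝ)
    (I : Type) [Fintype I] (A : I → Matrix (ZMod N) (ZMod N) ℂ)
    (hS3 : ∑ i : I, ‖(A i * QFT N).trace / (N : ℂ)‖ ^ 2 ≥ 1 - η) :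
    ((1 / N : ℝ) * ∑ k : ZMod N, ∑ i : I,
      ‖(A i * QFT N) k k‖ ^ 2 ≥ 1 - η) ∧
    ((1 / N : ℝ) * ∑ k : ZMod N, ∑ i : I,
      ‖(QFT N * A i) k k‖ ^ 2 ≥ 1 - η) := by
  have bound : ∀ B : I → Matrix (ZMod N) (ZMod N) ℂ,
      ∑ i, ‖(B i).trace / (N : ℂ)‖ ^ 2 ≤ (1 / N : ℝ) * ∑ k, ∑ i, ‖B i k k‖ ^ 2 := fun B => by
    simpa only [ZMod.card] using Matrix.sum_norm_trace_div_card_sq_le B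
  have trace_comm : ∀ i, (QFT N * A i).trace = (A i * QFT N).trace :=
    fun i => Matrix.trace_mul_comm _ _
  refine ⟨hS3.trans (bound _), hS3.trans ?_⟩
  simpa only [trace_comm] using bound fun i => QFT N * A i

/-- If a quantum channel with Kraus operators `A i` is in `S3(η)`, then it is in
`S1(η)` and in `S2(η)`. -/
theorem s3_implies_s1_and_s2 (N : ℕ) [NeZero N] (η : ℝ)
    (hη : η ∈ Set.Icc (0 : ℝ) 1)
    (I : Type) [Fintype I] (A : I → Matrix (ZMod N) (ZMod N) ℂ)
    (hK : ∑ i : I, (A i)ᴴ * A i = 1)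
    (hS3 : ∑ i : I, ‖(A i * QFT N).trace / (N : ℂ)‖ ^ 2 ≥ 1 - η) :
    ((1 / N : ℝ) * ∑ k : ZMod N, ∑ i : I,
      ‖(A i * QFT N) k k‖ ^ 2 ≥ 1 - η) ∧
    ((1 / N : ℝ) * ∑ k : ZMod N, ∑ i : I,
      ‖(QFT N * A i) k k‖ ^ 2 ≥ 1 - η) :=
  s3_implies_s1_and_s2_general N η I A hS3
end

section
/- Let M ≥ 1 be an integer, η ∈ [0,1], and for each p ∈ Fin M let x_p = r_p·e^{iθ_p} ∈ ℂ with r_p ∈ [0,1] and θ_p ∈ ℝ. If |(1/M) Σ_{p} x_p|² ≥ 1 − η, then |(1/M) Σ_p e^{iθ_p}|² ≥ 1 − 2η; equivalently, (1/M²) Σ_{p,q} cos(θ_p − θ_q) ≥ 1 − 2η. -/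
open scoped BigOperators
open Finset

/-!
Replacing every modulus `r p` by `1` moves `∑ x p` by at most `∑ (1 - r p) ≤ M - ‖∑ x p‖`,
so `‖∑ e^{iθ_p}‖ ≥ 2 ‖∑ x p‖ - M`. For the averages `a` of the phases and `b` of the `x p`
this reads `a ≥ 2b - 1`, whence `a² ≥ (2b - 1)² ≥ 2b² - 1 ≥ 1 - 2η`.
-/

section NormedSpace

variable {ι E : Type*} [NormedAddCommGroup E] [NormedSpace ℝ E]

theorem two_mul_norm_sum_smul_sub_card_le_norm_sum (s : Finset ι) (u : ι → E) (r : ι → ℝ)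
    (hu : ∀ i ∈ s, ‖u i‖ ≤ 1) (hr : ∀ i ∈ s, r i ∈ Set.Icc (0 : ℝ) 1) :
    2 * ‖∑ i ∈ s, r i • u i‖ - #s ≤ ‖∑ i ∈ s, u i‖ := by
  have hshrunk : ‖∑ i ∈ s, r i • u i‖ ≤ ∑ i ∈ s, r i := by
    refine (norm_sum_le _ _).trans (sum_le_sum fun i hi => ?_)
    rw [norm_smul, Real.norm_of_nonneg (hr i hi).1]
    exact mul_le_of_le_one_right (hr i hi).1 (hu i hi)
  have hdiff : ‖∑ i ∈ s, u i - ∑ i ∈ s, r i • u i‖ ≤ #s - ∑ i ∈ s, r i := by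
    rw [← sum_sub_distrib, ← nsmul_one, ← sum_const, ← sum_sub_distrib]
    refine (norm_sum_le _ _).trans (sum_le_sum fun i hi => ?_)
    have hr' : 0 ≤ 1 - r i := sub_nonneg.2 (hr i hi).2
    have hsmul : u i - r i • u i = (1 - r i) • u i := by rw [sub_smul, one_smul]
    rw [hsmul, norm_smul, Real.norm_of_nonneg hr']
    exact mul_le_of_le_one_right hr' (hu i hi)
  linarith [norm_le_norm_add_norm_sub (∑ i ∈ s, u i) (∑ i ∈ s, r i • u i)]

theorem two_mul_norm_average_smul_sub_one_le_norm_average (s : Finset ι) (u : ι → E)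
    (r : ι → ℝ) (hu : ∀ i ∈ s, ‖u i‖ ≤ 1) (hr : ∀ i ∈ s, r i ∈ Set.Icc (0 : ℝ) 1) :
    2 * ‖(#s : ℝ)⁻¹ • ∑ i ∈ s, r i • u i‖ - 1 ≤ ‖(#s : ℝ)⁻¹ • ∑ i ∈ s, u i‖ := by
  rcases s.eq_empty_or_nonempty with rfl | hs
  · simp
  have hcard : (#s : ℝ)⁻¹ * #s = 1 := inv_mul_cancel₀ (by simp [hs.ne_empty])
  rw [norm_smul, norm_smul, Real.norm_of_nonneg (by positivity)]
  calc 2 * ((#s : ℝ)⁻¹ * ‖∑ i ∈ s, r i • u i‖) - 1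
      = (#s : ℝ)⁻¹ * (2 * ‖∑ i ∈ s, r i • u i‖ - #s) := by rw [mul_sub, hcard]; ring
    _ ≤ (#s : ℝ)⁻¹ * ‖∑ i ∈ s, u i‖ :=
      mul_le_mul_of_nonneg_left (two_mul_norm_sum_smul_sub_card_le_norm_sum s u r hu hr)
        (by positivity)

end NormedSpace

theorem two_mul_sq_sub_one_le_sq_of_two_mul_sub_one_le {a b : ℝ} (hb : 0 ≤ b)
    (h : 2 * b - 1 ≤ a) : 2 * b ^ 2 - 1 ≤ a ^ 2 := by
  rcases le_total (2 * b - 1) 0 with hneg | hpos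
  · nlinarith
  · nlinarith [pow_le_pow_left₀ hpos h 2, sq_nonneg (b - 1)]

theorem norm_sum_exp_ofReal_mul_I_sq {ι : Type*} (s : Finset ι) (θ : ι → ℝ) :
    ‖∑ p ∈ s, Complex.exp (θ p * Complex.I)‖ ^ 2 = ∑ p ∈ s, ∑ q ∈ s, Real.cos (θ p - θ q) := by
  have hsq : ∀ z : ℂ, ‖z‖ ^ 2 = (z * (starRingEnd ℂ) z).re := fun z => by
    rw [Complex.mul_conj, Complex.ofReal_re, Complex.sq_norm]
  rw [hsq, map_sum, sum_mul_sum, Complex.re_sum]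
  refine sum_congr rfl fun p _ => ?_
  rw [Complex.re_sum]
  refine sum_congr rfl fun q _ => ?_
  have hexponent : (θ p : ℂ) * Complex.I + (starRingEnd ℂ) (θ q * Complex.I)
      = ((θ p - θ q : ℝ) : ℂ) * Complex.I := by
    simp only [map_mul, Complex.conj_ofReal, Complex.conj_I]
    push_cast
    ring
  rw [← Complex.exp_conj, ← Complex.exp_add, hexponent, Complex.exp_ofReal_mul_I_re]

theorem phases_close_on_average_general (M : ℕ) (η : ℝ)
    (r θ : Fin M → ℝ) (hr : ∀ p, r p ∈ Set.Icc (0 : ℝ) 1)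
    (x : Fin M → ℂ)
    (hx : ∀ p, x p = (r p : ℂ) * Complex.exp ((θ p : ℂ) * Complex.I))
    (h : ‖(1 / M : ℂ) * ∑ p : Fin M, x p‖ ^ 2 ≥ 1 - η) :
    (‖(1 / M : ℂ) * ∑ p : Fin M, Complex.exp ((θ p : ℂ) * Complex.I)‖ ^ 2
      ≥ 1 - 2 * η) ∧
    ((1 / (M : ℝ) ^ 2) * ∑ p : Fin M, ∑ q : Fin M, Real.cos (θ p - θ q) ≥ 1 - 2 * η) := by
  have haverage : ∀ z : ℂ, (1 / M : ℂ) * z = ((#(univ : Finset (Fin M)) : ℝ)⁻¹ : ℝ) • z := by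
    intro z; simp [Complex.real_smul]
  have hkey := two_mul_norm_average_smul_sub_one_le_norm_average univ
    (fun p => Complex.exp ((θ p : ℂ) * Complex.I)) r
    (fun p _ => (Complex.norm_exp_ofReal_mul_I _).le) fun p _ => hr p
  simp only [Complex.real_smul, ← hx, ← haverage] at hkey
  have hphases : 1 - 2 * η ≤ ‖(1 / M : ℂ) * ∑ p : Fin M, Complex.exp (θ p * Complex.I)‖ ^ 2 := by
    linarith [two_mul_sq_sub_one_le_sq_of_two_mul_sub_one_le (norm_nonneg _) hkey]
  refine ⟨hphases, ?_⟩
  have hscale : ‖(1 / M : ℂ) * ∑ p : Fin M, Complex.exp (θ p * Complex.I)‖ ^ 2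
      = 1 / (M : ℝ) ^ 2 * ‖∑ p : Fin M, Complex.exp (θ p * Complex.I)‖ ^ 2 := by
    rw [norm_mul, mul_pow]
    simp
  rw [← norm_sum_exp_ofReal_mul_I_sq, ← hscale]
  exact hphases

/-- If complex numbers `x p = r p · e^{i θ p}` with moduli `r p ∈ [0,1]` have an
average of modulus close to 1, then the phases `θ p` are close to each other on
average: `|E_p[e^{iθ_p}]|² = E_{p,q}[cos(θ_p − θ_q)] ≥ 1 − 2η`. -/
theorem phases_close_on_average (M : ℕ) (hM : 1 ≤ M) (η : ℝ)
    (hη : η ∈ Set.Icc (0 : ℝ) 1)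
    (r θ : Fin M → ℝ) (hr : ∀ p, r p ∈ Set.Icc (0 : ℝ) 1)
    (x : Fin M → ℂ)
    (hx : ∀ p, x p = (r p : ℂ) * Complex.exp ((θ p : ℂ) * Complex.I))
    (h : ‖(1 / M : ℂ) * ∑ p : Fin M, x p‖ ^ 2 ≥ 1 - η) :
    (‖(1 / M : ℂ) * ∑ p : Fin M, Complex.exp ((θ p : ℂ) * Complex.I)‖ ^ 2
      ≥ 1 - 2 * η) ∧
    ((1 / (M : ℝ) ^ 2) * ∑ p : Fin M, ∑ q : Fin M, Real.cos (θ p - θ q) ≥ 1 - 2 * η) :=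
  phases_close_on_average_general M η r θ hr x hx h
end

section
/- Let η ∈ [0,1], let (A_i)_{i∈I} be a finite family of N×N complex matrices with Σ_i A_i† A_i = 1 satisfying Σ_i |Tr(A_i F)/N|² ≥ 1 − η (i.e. C ∈ S3(η)). Let d ≥ 1, let β ∈ ℂ^d with Σ_{k∈Fin d} |β_k|² = 1, and let p : Fin d → ZMod N. Then (1/N) Σ_{l∈ZMod N} Σ_i | Σ_{k∈Fin d} |β_k|² · (A_i F)_{p_k+l, p_k+l} |² ≥ 1 − η. (This quantity equals the average fidelity E_l[F((C⊗I)(|φ_{2,l}⟩⟨φ_{2,l}|), |φ_{3,l}⟩⟨φ_{3,l}|)] between the result of applying the noisy inverse QFT C to the phase-estimation state |φ_{2,l}⟩ = Σ_k β_k f_{p_k+l} ⊗ e_k and the ideal state |φ_{3,l}⟩ = Σ_k β_k e_{p_k+l} ⊗ e_k; it is the key estimate in the proof of the exact-eigenvalue HHL theorem.) -/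
open scoped BigOperators ComplexConjugate
open Finset Matrix

/-!
Summing the `l`-th diagonal average `Σ_k |β_k|² (A_i F)_{p_k+l, p_k+l}` over all shifts `l`
gives `Tr(A_i F)`, because each shift `l ↦ p_k + l` permutes `ZMod N` and the weights sum
to one. Hence `Tr(A_i F)/N` is the mean over `l` of these averages, and Cauchy–Schwarz
(`|mean|² ≤ mean of |·|²`) bounds each term of the `S3(η)` sum by the corresponding term
of the fidelity.
-/

theorem Matrix.sum_sum_mul_diag_shift_eq_trace {G R ι : Type*} [AddGroup G] [Fintype G]
    [Semiring R] [Fintype ι] (M : Matrix G G R) (w : ι → R) (hw : ∑ k, w k = 1)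
    (p : ι → G) :
    ∑ l, ∑ k, w k * M (p k + l) (p k + l) = M.trace := by
  have hshift (k : ι) : ∑ l, M (p k + l) (p k + l) = M.trace :=
    Fintype.sum_equiv (Equiv.addLeft (p k)) _ _ fun _ => rfl
  rw [sum_comm]
  simp only [← mul_sum, hshift, ← sum_mul, hw, one_mul]

theorem RCLike.norm_sum_div_card_sq_le {𝕜 ι : Type*} [RCLike 𝕜] (s : Finset ι) (f : ι → 𝕜) :
    ‖(∑ i ∈ s, f i) / #s‖ ^ 2 ≤ (∑ i ∈ s, ‖f i‖ ^ 2) / #s := calc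
  ‖(∑ i ∈ s, f i) / #s‖ ^ 2 ≤ ((∑ i ∈ s, ‖f i‖) / #s) ^ 2 := by
    rw [norm_div, RCLike.norm_natCast]
    gcongr
    exact norm_sum_le _ _
  _ ≤ (∑ i ∈ s, ‖f i‖ ^ 2) / #s := sum_div_card_sq_le_sum_sq_div_card

theorem hhl_key_estimate_exact_general (N : ℕ) [NeZero N] (η : ℝ)
    (I : Type) [Fintype I] (A : I → Matrix (ZMod N) (ZMod N) ℂ)
    (hS3 : ∑ i : I, ‖(A i * QFT N).trace / (N : ℂ)‖ ^ 2 ≥ 1 - η)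
    (d : ℕ) (β : Fin d → ℂ)
    (hβ : ∑ k : Fin d, ‖β k‖ ^ 2 = 1)
    (p : Fin d → ZMod N) :
    (1 / N : ℝ) * ∑ l : ZMod N, ∑ i : I,
      ‖∑ k : Fin d,
        ((‖β k‖ ^ 2 : ℝ) : ℂ) * (A i * QFT N) (p k + l) (p k + l)‖ ^ 2
      ≥ 1 - η := by
  have hw : ∑ k, ((‖β k‖ ^ 2 : ℝ) : ℂ) = 1 := by exact_mod_cast hβ
  have hcard : #(univ : Finset (ZMod N)) = N := by rw [card_univ, ZMod.card]
  calc 1 - η ≤ ∑ i, ‖(A i * QFT N).trace / (N : ℂ)‖ ^ 2 := hS3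
    _ ≤ ∑ i, (∑ l : ZMod N, ‖∑ k, ((‖β k‖ ^ 2 : ℝ) : ℂ) *
          (A i * QFT N) (p k + l) (p k + l)‖ ^ 2) / N := by
      gcongr with i
      rw [← (A i * QFT N).sum_sum_mul_diag_shift_eq_trace _ hw p]
      simpa only [hcard] using RCLike.norm_sum_div_card_sq_le (univ : Finset (ZMod N)) _
    _ = _ := by rw [sum_comm, mul_sum, one_div]; simp only [div_eq_inv_mul]

/-- Key estimate for the exact-eigenvalue HHL theorem: if `C ∈ S3(η)` with Kraus
operators `A i`, then the average fidelity
`E_l[F((C⊗I)(|φ_{2,l}⟩⟨φ_{2,l}|), |φ_{3,l}⟩⟨φ_{3,l}|)]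
  = (1/N) Σ_l Σ_i |Σ_k |β_k|² (A_i F)_{p_k+l, p_k+l}|²` is at least `1 − η`. -/
theorem hhl_key_estimate_exact (N : ℕ) [NeZero N] (η : ℝ)
    (hη : η ∈ Set.Icc (0 : ℝ) 1)
    (I : Type) [Fintype I] (A : I → Matrix (ZMod N) (ZMod N) ℂ)
    (hK : ∑ i : I, (A i)ᴴ * A i = 1)
    (hS3 : ∑ i : I, ‖(A i * QFT N).trace / (N : ℂ)‖ ^ 2 ≥ 1 - η)
    (d : ℕ) (hd : 1 ≤ d) (β : Fin d → ℂ)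
    (hβ : ∑ k : Fin d, ‖β k‖ ^ 2 = 1)
    (p : Fin d → ZMod N) :
    (1 / N : ℝ) * ∑ l : ZMod N, ∑ i : I,
      ‖∑ k : Fin d,
        ((‖β k‖ ^ 2 : ℝ) : ℂ) * (A i * QFT N) (p k + l) (p k + l)‖ ^ 2
      ≥ 1 - η :=
  hhl_key_estimate_exact_general N η I A hS3 d β hβ p
end

section
/- Let η ∈ [0,1] and let C be an N×N unitary matrix with (1/N) Σ_{k∈ZMod N} |(C F)_{k,k}|² ≥ 1 − η (the unitary channel of C lies in S1(η)). Let d ≥ 1, β ∈ ℂ^d with Σ_k |β_k|² = 1, p : Fin d → ZMod N, and f : ZMod N → [−1,1]. For l ∈ ZMod N define: the unitary R_l = Σ_{t∈ZMod N} (e_t e_t†) ⊗ I_d ⊗ Rot(f(t−l)) on ℂ^N ⊗ ℂ^d ⊗ ℂ²; the state |ψ_{5,l}⟩ = (C† ⊗ I_d ⊗ I_2)·R_l·(C ⊗ I_d ⊗ I_2)·((Σ_k β_k · f_{p_k+l} ⊗ e_k) ⊗ e_0); and the target |φ_{5,l}⟩ = Σ_k β_k · f_{p_k+l} ⊗ e_k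 ⊗ (f(p_k)·e_0 + √(1−f(p_k)²)·e_1). Then (1/N) Σ_{l∈ZMod N} (1 − |⟨φ_{5,l}, ψ_{5,l}⟩|²) ≤ 2√(2η). (This is Theorem 6.1: in the case where the eigenvalues p_k/N are exact n-bit numbers, running the HHL algorithm with C in place of F⁻¹ and C⁻¹ = C† in place of F gives average squared trace distance between the output and the ideal HHL output at most 2√(2η); the remaining steps of the algorithm are exact unitaries and preserve trace distance, and for unit vectors T(φ,ψ)² = 1 − |⟨φ,ψ⟩|².) -/
/-!
Conjugating by `C ⊗ I ⊗ I` turns the overlap `⟨φ_{5,l}, ψ_{5,l}⟩` into the real number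
`S_l = ∑_k |β_k|² ∑_t |W_{t,p_k+l}|² cos (α_{p_k} - α_{t-l})`, where `W = C F` and `f = cos α`:
a convex combination of cosines, the weights being squared entries of columns of the unitary `W`.
The weight at `t = p_k + l` carries cosine `1` and all other cosines are `≥ -1`, so
`1 - S_l ≤ 2 ∑_k |β_k|² (1 - |W_{m_k,m_k}|²)` with `m_k = p_k + l`, and `|S_l| ≤ 1` gives
`1 - S_l² ≤ 2 (1 - S_l)`. Averaging over `l` runs `m_k` through all of `ZMod N`, so the average of
`1 - S_l²` is at most `4η`; it is also at most `1`, and `min (4η) 1 ≤ 2 √(2η)`.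
-/

open scoped BigOperators ComplexConjugate
open Finset Matrix

/-- The 2×2 rotation `Rot(c)` with columns `(c, √(1−c²))` and `(−√(1−c²), c)`. -/
noncomputable def Rot (c : ℝ) : Matrix (Fin 2) (Fin 2) ℂ :=
  !![(c : ℂ), (-(Real.sqrt (1 - c ^ 2)) : ℝ); ((Real.sqrt (1 - c ^ 2) : ℝ) : ℂ), (c : ℂ)]

/-- `M ⊗ I_d ⊗ I_2` acting on `ℂ^N ⊗ ℂ^d ⊗ ℂ²`. -/
noncomputable def opTens (N d : ℕ) [NeZero N] (M : Matrix (ZMod N) (ZMod N) ℂ) :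
    Matrix (ZMod N × Fin d × Fin 2) (ZMod N × Fin d × Fin 2) ℂ :=
  fun q q' => if q.2 = q'.2 then M q.1 q'.1 else 0

/-- The controlled rotation `Σ_t (e_t e_t†) ⊗ I_d ⊗ Rot(g t)`. -/
noncomputable def ctrlRot (N d : ℕ) [NeZero N] (g : ZMod N → ℝ) :
    Matrix (ZMod N × Fin d × Fin 2) (ZMod N × Fin d × Fin 2) ℂ :=
  fun q q' => if q.1 = q'.1 ∧ q.2.1 = q'.2.1 then Rot (g q.1) q.2.2 q'.2.2 else 0

/-- The state `|φ_{2,l}⟩ ⊗ e_0 = (Σ_k β_k · f_{p_k+l} ⊗ e_k) ⊗ e_0`. -/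
noncomputable def phi2 (N d : ℕ) [NeZero N] (β : Fin d → ℂ) (p : Fin d → ZMod N)
    (l : ZMod N) : ZMod N × Fin d × Fin 2 → ℂ :=
  fun q => β q.2.1 * QFT N q.1 (p q.2.1 + l) * (if q.2.2 = 0 then 1 else 0)

/-- The target state
`|φ_{5,l}⟩ = Σ_k β_k · f_{p_k+l} ⊗ e_k ⊗ (f(p_k)·e_0 + √(1−f(p_k)²)·e_1)`. -/
noncomputable def phi5 (N d : ℕ) [NeZero N] (β : Fin d → ℂ) (p : Fin d → ZMod N)
    (f : ZMod N → ℝ) (l : ZMod N) : ZMod N × Fin d × Fin 2 → ℂ :=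
  fun q => β q.2.1 * QFT N q.1 (p q.2.1 + l) *
    (if q.2.2 = 0 then ((f (p q.2.1) : ℝ) : ℂ)
      else ((Real.sqrt (1 - f (p q.2.1) ^ 2) : ℝ) : ℂ))

/-- For `a = cos α` and `c = cos γ` with `α, γ ∈ [0, π]` this is `cos (α - γ)`. -/
noncomputable def rotOverlap (a c : ℝ) : ℝ :=
  a * c + Real.sqrt (1 - a ^ 2) * Real.sqrt (1 - c ^ 2)

lemma rotOverlap_self {a : ℝ} (ha : a ∈ Set.Icc (-1 : ℝ) 1) : rotOverlap a a = 1 := by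
  have : 0 ≤ 1 - a ^ 2 := by nlinarith [ha.1, ha.2]
  rw [rotOverlap, Real.mul_self_sqrt this]
  ring

lemma abs_rotOverlap_le_one {a c : ℝ} (ha : a ∈ Set.Icc (-1 : ℝ) 1)
    (hc : c ∈ Set.Icc (-1 : ℝ) 1) : |rotOverlap a c| ≤ 1 := by
  obtain ⟨ha₁, ha₂⟩ := ha
  obtain ⟨hc₁, hc₂⟩ := hc
  have hsa := Real.sq_sqrt (show 0 ≤ 1 - a ^ 2 by nlinarith)
  have hsc := Real.sq_sqrt (show 0 ≤ 1 - c ^ 2 by nlinarith)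
  rw [rotOverlap, abs_le]
  constructor
  · nlinarith [sq_nonneg (a + c), sq_nonneg (Real.sqrt (1 - a ^ 2) + Real.sqrt (1 - c ^ 2))]
  · nlinarith [sq_nonneg (a - c), sq_nonneg (Real.sqrt (1 - a ^ 2) - Real.sqrt (1 - c ^ 2))]

section ConvexCombination

variable {ι : Type*} [Fintype ι] {w c : ι → ℝ}

lemma abs_sum_mul_le_one (hw : ∀ i, 0 ≤ w i) (hw₁ : ∑ i, w i = 1) (hc : ∀ i, |c i| ≤ 1) :
    |∑ i, w i * c i| ≤ 1 :=
  calc |∑ i, w i * c i| ≤ ∑ i, |w i * c i| := Finset.abs_sum_le_sum_abs _ _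
    _ ≤ ∑ i, w i := Finset.sum_le_sum fun i _ => by
        rw [abs_mul, abs_of_nonneg (hw i)]
        exact mul_le_of_le_one_right (hw i) (hc i)
    _ = 1 := hw₁

lemma one_sub_sum_mul_eq (hw₁ : ∑ i, w i = 1) :
    1 - ∑ i, w i * c i = ∑ i, w i * (1 - c i) := by
  simp only [mul_sub, mul_one, Finset.sum_sub_distrib, hw₁]

/-- Only the terms `i ≠ i₀` contribute to `1 - ∑ w c`, each at most `2 w i`. -/
lemma one_sub_sum_mul_le (hw : ∀ i, 0 ≤ w i) (hw₁ : ∑ i, w i = 1) (hc : ∀ i, |c i| ≤ 1)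
    {i₀ : ι} (hc₀ : c i₀ = 1) : 1 - ∑ i, w i * c i ≤ 2 * (1 - w i₀) := by
  classical
  have hrest : ∑ i ∈ Finset.univ.erase i₀, w i = 1 - w i₀ := by
    rw [← hw₁, ← Finset.add_sum_erase _ _ (Finset.mem_univ i₀), add_sub_cancel_left]
  rw [one_sub_sum_mul_eq hw₁, ← Finset.add_sum_erase _ _ (Finset.mem_univ i₀), hc₀, sub_self,
    mul_zero, zero_add, ← hrest, Finset.mul_sum]
  exact Finset.sum_le_sum fun i _ => by nlinarith [hw i, (abs_le.mp (hc i)).1]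

end ConvexCombination

lemma le_two_mul_sqrt_two_mul {x η : ℝ} (hx₁ : x ≤ 1) (hxη : x ≤ 4 * η) :
    x ≤ 2 * Real.sqrt (2 * η) := by
  rcases le_or_gt (2 * η) 1 with hη | hη
  · linarith [Real.le_sqrt_self_iff.mpr hη]
  · linarith [Real.one_le_sqrt.mpr hη.le]

lemma conjTranspose_mul_self_apply_self {n : Type*} [Fintype n] (A : Matrix n n ℂ) (m : n) :
    (Aᴴ * A) m m = ((∑ t, ‖A t m‖ ^ 2 : ℝ) : ℂ) := by
  simp [Matrix.mul_apply, Complex.conj_mul']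

lemma sum_norm_sq_mul_apply_of_unitary {n : Type*} [Fintype n] [DecidableEq n]
    {C : Matrix n n ℂ} (hC : Cᴴ * C = 1) (A : Matrix n n ℂ) (m : n) :
    ∑ t, ‖(C * A) t m‖ ^ 2 = ∑ t, ‖A t m‖ ^ 2 := by
  have h : (C * A)ᴴ * (C * A) = Aᴴ * A := by
    rw [conjTranspose_mul, Matrix.mul_assoc, ← Matrix.mul_assoc Cᴴ, hC, Matrix.one_mul]
  exact_mod_cast (conjTranspose_mul_self_apply_self (C * A) m).symm.trans
    ((congrFun (congrFun h m) m).trans (conjTranspose_mul_self_apply_self A m))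

lemma norm_QFT_apply (N : ℕ) [NeZero N] (j k : ZMod N) :
    ‖QFT N j k‖ = 1 / Real.sqrt N := by
  have h : 2 * (Real.pi : ℂ) * Complex.I * (j.val : ℂ) * (k.val : ℂ) / (N : ℂ)
      = ((2 * Real.pi * j.val * k.val / N : ℝ) : ℂ) * Complex.I := by push_cast; ring
  rw [QFT, norm_div, h, Complex.norm_exp_ofReal_mul_I, Complex.norm_real, Real.norm_eq_abs,
    abs_of_nonneg (Real.sqrt_nonneg _)]

lemma sum_norm_sq_QFT_apply (N : ℕ) [NeZero N] (k : ZMod N) :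
    ∑ j, ‖QFT N j k‖ ^ 2 = 1 := by
  have hN : (0 : ℝ) < N := Nat.cast_pos.mpr (NeZero.pos N)
  simp only [norm_QFT_apply, div_pow, one_pow, Real.sq_sqrt hN.le, Finset.sum_const,
    Finset.card_univ, ZMod.card, nsmul_eq_mul]
  field_simp

section Tensor

variable {N d : ℕ} [NeZero N]

lemma opTens_conjTranspose (M : Matrix (ZMod N) (ZMod N) ℂ) :
    opTens N d Mᴴ = (opTens N d M)ᴴ := by
  ext q q'
  simp only [opTens, conjTranspose_apply, eq_comm (a := q.2)]
  split_ifs <;> simp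

lemma opTens_mulVec_apply (M : Matrix (ZMod N) (ZMod N) ℂ) (v : ZMod N × Fin d × Fin 2 → ℂ)
    (q : ZMod N × Fin d × Fin 2) :
    (opTens N d M *ᵥ v) q = ∑ j, M q.1 j * v (j, q.2) := by
  rw [mulVec, dotProduct, Fintype.sum_prod_type]
  refine Finset.sum_congr rfl fun j _ => ?_
  simp [opTens]

lemma opTens_mulVec_col (M A : Matrix (ZMod N) (ZMod N) ℂ) (a b : Fin d × Fin 2 → ℂ)
    (m : Fin d × Fin 2 → ZMod N) :
    opTens N d M *ᵥ (fun q => a q.2 * A q.1 (m q.2) * b q.2)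
      = fun q => a q.2 * (M * A) q.1 (m q.2) * b q.2 := by
  ext q
  simp only [opTens_mulVec_apply, Matrix.mul_apply, Finset.mul_sum, Finset.sum_mul]
  exact Finset.sum_congr rfl fun j _ => by ring

lemma ctrlRot_mulVec_apply (g : ZMod N → ℝ) (v : ZMod N × Fin d × Fin 2 → ℂ)
    (q : ZMod N × Fin d × Fin 2) :
    (ctrlRot N d g *ᵥ v) q = ∑ s, Rot (g q.1) q.2.2 s * v (q.1, q.2.1, s) := by
  simp [mulVec, dotProduct, Fintype.sum_prod_type, ctrlRot, ite_and]

end Tensor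

noncomputable def hhlOverlap {G ι : Type*} [AddGroup G] [Fintype G] [Fintype ι]
    (W : Matrix G G ℂ) (β : ι → ℂ) (p : ι → G) (f : G → ℝ) (l : G) : ℝ :=
  ∑ k, ‖β k‖ ^ 2 * ∑ t, ‖W t (p k + l)‖ ^ 2 * rotOverlap (f (p k)) (f (t - l))

lemma inner_phi5_psi5 {N d : ℕ} [NeZero N] (C : Matrix (ZMod N) (ZMod N) ℂ) (β : Fin d → ℂ)
    (p : Fin d → ZMod N) (f : ZMod N → ℝ) (l : ZMod N) :
    ∑ q, starRingEnd ℂ (phi5 N d β p f l q) *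
        (opTens N d Cᴴ *ᵥ (ctrlRot N d (fun t => f (t - l)) *ᵥ
          (opTens N d C *ᵥ phi2 N d β p l))) q
      = hhlOverlap (C * QFT N) β p f l := by
  change star (phi5 N d β p f l) ⬝ᵥ _ = _
  rw [opTens_conjTranspose, dotProduct_mulVec, vecMul_conjTranspose, star_star]
  have h5 : opTens N d C *ᵥ phi5 N d β p f l = fun q => β q.2.1 * (C * QFT N) q.1 (p q.2.1 + l) *
      (if q.2.2 = 0 then (f (p q.2.1) : ℂ) else (Real.sqrt (1 - f (p q.2.1) ^ 2) : ℂ)) :=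
    opTens_mulVec_col C (QFT N) (fun r => β r.1)
      (fun r => if r.2 = 0 then (f (p r.1) : ℂ) else (Real.sqrt (1 - f (p r.1) ^ 2) : ℂ))
      (fun r => p r.1 + l)
  have h2 : opTens N d C *ᵥ phi2 N d β p l = fun q => β q.2.1 * (C * QFT N) q.1 (p q.2.1 + l) *
      (if q.2.2 = 0 then 1 else 0) :=
    opTens_mulVec_col C (QFT N) (fun r => β r.1) (fun r => if r.2 = 0 then 1 else 0)
      (fun r => p r.1 + l)
  rw [h5, h2, hhlOverlap, dotProduct]
  simp only [Fintype.sum_prod_type]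
  rw [Finset.sum_comm, Complex.ofReal_sum]
  refine Finset.sum_congr rfl fun k _ => ?_
  rw [Complex.ofReal_mul, Complex.ofReal_sum, Finset.mul_sum]
  refine Finset.sum_congr rfl fun t _ => ?_
  simp [ctrlRot_mulVec_apply, Fin.sum_univ_two, Rot, rotOverlap, ← Complex.conj_mul']
  ring

section Overlap

variable {G ι : Type*} [AddGroup G] [Fintype G] [Fintype ι] {W : Matrix G G ℂ} {β : ι → ℂ}
  {p : ι → G} {f : G → ℝ}

lemma abs_hhlOverlap_le_one (hW : ∀ m, ∑ t, ‖W t m‖ ^ 2 = 1) (hβ : ∑ k, ‖β k‖ ^ 2 = 1)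
    (hf : ∀ t, f t ∈ Set.Icc (-1 : ℝ) 1) (l : G) : |hhlOverlap W β p f l| ≤ 1 :=
  abs_sum_mul_le_one (fun _ => sq_nonneg _) hβ fun _ =>
    abs_sum_mul_le_one (fun _ => sq_nonneg _) (hW _) fun _ => abs_rotOverlap_le_one (hf _) (hf _)

lemma one_sub_hhlOverlap_le (hW : ∀ m, ∑ t, ‖W t m‖ ^ 2 = 1) (hβ : ∑ k, ‖β k‖ ^ 2 = 1)
    (hf : ∀ t, f t ∈ Set.Icc (-1 : ℝ) 1) (l : G) :
    1 - hhlOverlap W β p f l ≤ 2 * ∑ k, ‖β k‖ ^ 2 * (1 - ‖W (p k + l) (p k + l)‖ ^ 2) := by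
  rw [hhlOverlap, one_sub_sum_mul_eq hβ, Finset.mul_sum]
  refine Finset.sum_le_sum fun k _ => ?_
  have hdiag : rotOverlap (f (p k)) (f (p k + l - l)) = 1 := by
    rw [add_sub_cancel_right, rotOverlap_self (hf _)]
  have := one_sub_sum_mul_le (c := fun t => rotOverlap (f (p k)) (f (t - l)))
    (fun _ => sq_nonneg _) (hW (p k + l))
    (fun _ => abs_rotOverlap_le_one (hf _) (hf _)) hdiag
  nlinarith [sq_nonneg ‖β k‖]

lemma one_sub_sq_hhlOverlap_le (hW : ∀ m, ∑ t, ‖W t m‖ ^ 2 = 1) (hβ : ∑ k, ‖β k‖ ^ 2 = 1)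
    (hf : ∀ t, f t ∈ Set.Icc (-1 : ℝ) 1) (l : G) :
    1 - hhlOverlap W β p f l ^ 2 ≤ 4 * ∑ k, ‖β k‖ ^ 2 * (1 - ‖W (p k + l) (p k + l)‖ ^ 2) := by
  have h₁ := abs_le.mp (abs_hhlOverlap_le_one hW hβ hf (p := p) l)
  have h₂ := one_sub_hhlOverlap_le hW hβ hf (p := p) l
  nlinarith

lemma sum_one_sub_sq_hhlOverlap_le (hW : ∀ m, ∑ t, ‖W t m‖ ^ 2 = 1) (hβ : ∑ k, ‖β k‖ ^ 2 = 1)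
    (hf : ∀ t, f t ∈ Set.Icc (-1 : ℝ) 1) :
    ∑ l, (1 - hhlOverlap W β p f l ^ 2) ≤ 4 * ∑ m, (1 - ‖W m m‖ ^ 2) :=
  calc ∑ l, (1 - hhlOverlap W β p f l ^ 2)
      ≤ ∑ l, 4 * ∑ k, ‖β k‖ ^ 2 * (1 - ‖W (p k + l) (p k + l)‖ ^ 2) :=
        Finset.sum_le_sum fun l _ => one_sub_sq_hhlOverlap_le hW hβ hf l
    _ = 4 * ∑ k, ‖β k‖ ^ 2 * ∑ l, (1 - ‖W (p k + l) (p k + l)‖ ^ 2) := by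
        rw [← Finset.mul_sum, Finset.sum_comm]
        simp only [Finset.mul_sum]
    _ = 4 * ∑ m, (1 - ‖W m m‖ ^ 2) := by
        have hshift : ∀ k, ∑ l, (1 - ‖W (p k + l) (p k + l)‖ ^ 2) = ∑ m, (1 - ‖W m m‖ ^ 2) :=
          fun k => Equiv.sum_comp (Equiv.addLeft (p k)) fun m => 1 - ‖W m m‖ ^ 2
        simp only [hshift, ← Finset.sum_mul, hβ, one_mul]

end Overlap

theorem hhl_with_c_and_cinv_exact_general (N : ℕ) [NeZero N] (η : ℝ)
    (C : Matrix (ZMod N) (ZMod N) ℂ) (hC : Cᴴ * C = 1)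
    (hS1 : (1 / N : ℝ) * ∑ k : ZMod N,
      ‖(C * QFT N) k k‖ ^ 2 ≥ 1 - η)
    (d : ℕ) (β : Fin d → ℂ)
    (hβ : ∑ k : Fin d, ‖β k‖ ^ 2 = 1)
    (p : Fin d → ZMod N) (f : ZMod N → ℝ) (hf : ∀ t, f t ∈ Set.Icc (-1 : ℝ) 1) :
    (1 / N : ℝ) * ∑ l : ZMod N,
      (1 - ‖(∑ q : ZMod N × Fin d × Fin 2,
        (starRingEnd ℂ) (phi5 N d β p f l q) *
          ((opTens N d Cᴴ *ᵥ (ctrlRot N d (fun t => f (t - l)) *ᵥ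
            (opTens N d C *ᵥ phi2 N d β p l))) q))‖ ^ 2)
      ≤ 2 * Real.sqrt (2 * η) := by
  have hW : ∀ m, ∑ t, ‖(C * QFT N) t m‖ ^ 2 = 1 := fun m =>
    (sum_norm_sq_mul_apply_of_unitary hC _ m).trans (sum_norm_sq_QFT_apply N m)
  simp only [inner_phi5_psi5, Complex.norm_real, Real.norm_eq_abs, sq_abs]
  refine le_two_mul_sqrt_two_mul ?_ ?_
  · calc (1 / N : ℝ) * ∑ l, (1 - hhlOverlap (C * QFT N) β p f l ^ 2)
        ≤ (1 / N : ℝ) * ∑ _l : ZMod N, 1 := by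
          gcongr with l
          linarith [sq_nonneg (hhlOverlap (C * QFT N) β p f l)]
      _ = 1 := by simp [ZMod.card]
  · calc (1 / N : ℝ) * ∑ l, (1 - hhlOverlap (C * QFT N) β p f l ^ 2)
        ≤ (1 / N : ℝ) * (4 * ∑ m, (1 - ‖(C * QFT N) m m‖ ^ 2)) := by
          gcongr
          exact sum_one_sub_sq_hhlOverlap_le hW hβ hf
      _ = 4 * (1 - (1 / N : ℝ) * ∑ m, ‖(C * QFT N) m m‖ ^ 2) := by
          have hN : (N : ℝ) ≠ 0 := NeZero.ne _
          simp [Finset.sum_sub_distrib, ZMod.card]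
          field_simp
      _ ≤ 4 * η := by linarith

/-- Theorem 6.1: when the eigenvalues are exact `n`-bit numbers and HHL is run with
a unitary `C ∈ S1(η)` in place of `F⁻¹` and `C†` in place of `F`, the average
squared trace distance between output and ideal states is at most `2√(2η)`. -/
theorem hhl_with_c_and_cinv_exact (N : ℕ) [NeZero N] (η : ℝ)
    (hη : η ∈ Set.Icc (0 : ℝ) 1)
    (C : Matrix (ZMod N) (ZMod N) ℂ) (hC : Cᴴ * C = 1)
    (hS1 : (1 / N : ℝ) * ∑ k : ZMod N,
      ‖(C * QFT N) k k‖ ^ 2 ≥ 1 - η)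
    (d : ℕ) (hd : 1 ≤ d) (β : Fin d → ℂ)
    (hβ : ∑ k : Fin d, ‖β k‖ ^ 2 = 1)
    (p : Fin d → ZMod N) (f : ZMod N → ℝ) (hf : ∀ t, f t ∈ Set.Icc (-1 : ℝ) 1) :
    (1 / N : ℝ) * ∑ l : ZMod N,
      (1 - ‖(∑ q : ZMod N × Fin d × Fin 2,
        (starRingEnd ℂ) (phi5 N d β p f l q) *
          ((opTens N d Cᴴ *ᵥ (ctrlRot N d (fun t => f (t - l)) *ᵥ
            (opTens N d C *ᵥ phi2 N d β p l))) q))‖ ^ 2)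
      ≤ 2 * Real.sqrt (2 * η) :=
  hhl_with_c_and_cinv_exact_general N η C hC hS1 d β hβ p f hf
end

section
/- Let η1, η2, η3 ∈ [0,1] and let C and P be N×N unitary matrices. Assume (1/N) Σ_{k∈ZMod N} |(C F)_{k,k}|² ≥ 1 − η1 (C ∈ S1(η1)), (1/N) Σ_k |(F† P)_{k,k}|² ≥ 1 − η2 (P ∈ T2(η2)), and |Tr(C·P)/N| ≥ 1 − η3. Then |(1/N) Σ_{k∈ZMod N} (F† P)_{k,k} · (C F)_{k,k}| ≥ 1 − (η1 + η2 + η3). (In bra-ket notation: |E_k[⟨f_k| P |e_k⟩·⟨e_k| C |f_k⟩]| ≥ 1 − (η1+η2+η3).) -/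
/-!
Put `A = C F` and `B = F† P`; both are unitary and `A B = C P`, so
`Tr (C P) = ∑ₖ A_kk B_kk + ∑_{k ≠ l} A_kl B_lk`. Since the rows of `A` and the columns of `B`
are unit vectors, the hypotheses `C ∈ S1(η1)`, `P ∈ T2(η2)` bound the off-diagonal masses
`∑_{k ≠ l} |A_kl|²` and `∑_{k ≠ l} |B_lk|²` by `N η1` and `N η2`, and by AM-GM the cross term is
at most their mean.
-/

open scoped BigOperators ComplexConjugate
open Finset Matrix

namespace Matrix

variable {n : Type*} [Fintype n] [DecidableEq n]

theorem norm_trace_mul_sub_sum_diag_mul_le {R : Type*} [NonUnitalSeminormedRing R]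
    (A B : Matrix n n R) :
    ‖(A * B).trace - ∑ k, A k k * B k k‖ ≤
      (∑ k, ∑ l ∈ univ.erase k, ‖A k l‖ ^ 2 + ∑ k, ∑ l ∈ univ.erase k, ‖B l k‖ ^ 2) / 2 := by
  have hoff : (A * B).trace - ∑ k, A k k * B k k = ∑ k, ∑ l ∈ univ.erase k, A k l * B l k := by
    simp only [trace, diag, mul_apply, ← sum_sub_distrib, sum_erase_eq_sub (mem_univ _)]
  calc ‖(A * B).trace - ∑ k, A k k * B k k‖
      ≤ ∑ k, ∑ l ∈ univ.erase k, ‖A k l‖ * ‖B l k‖ := by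
        rw [hoff]
        exact (norm_sum_le _ _).trans <| sum_le_sum fun k _ =>
          (norm_sum_le _ _).trans <| sum_le_sum fun l _ => norm_mul_le _ _
    _ ≤ ∑ k, ∑ l ∈ univ.erase k, (‖A k l‖ ^ 2 + ‖B l k‖ ^ 2) / 2 := by
        gcongr with k _ l _
        nlinarith [sq_nonneg (‖A k l‖ - ‖B l k‖)]
    _ = _ := by simp only [← sum_div, ← sum_add_distrib]

variable {𝕜 : Type*} [RCLike 𝕜] {A : Matrix n n 𝕜}

theorem sum_norm_sq_col_eq_one (hA : A ∈ unitaryGroup n 𝕜) (k : n) :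
    ∑ l, ‖A l k‖ ^ 2 = 1 := by
  have h := congr_fun₂ (mem_unitaryGroup_iff'.mp hA) k k
  simp only [star_eq_conjTranspose, mul_apply, conjTranspose_apply, one_apply_eq,
    RCLike.star_def, RCLike.conj_mul] at h
  exact_mod_cast h

theorem sum_norm_sq_row_eq_one (hA : A ∈ unitaryGroup n 𝕜) (k : n) :
    ∑ l, ‖A k l‖ ^ 2 = 1 := by
  simpa [star_eq_conjTranspose] using sum_norm_sq_col_eq_one (Unitary.star_mem hA) k

theorem sum_sum_erase_norm_sq_row_le {η : ℝ} (hA : A ∈ unitaryGroup n 𝕜)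
    (hdiag : (1 - η) * Fintype.card n ≤ ∑ k, ‖A k k‖ ^ 2) :
    ∑ k, ∑ l ∈ univ.erase k, ‖A k l‖ ^ 2 ≤ Fintype.card n * η := by
  simp only [sum_erase_eq_sub (mem_univ _), sum_norm_sq_row_eq_one hA, sum_sub_distrib,
    sum_const, card_univ, nsmul_one]
  linarith

theorem sum_sum_erase_norm_sq_col_le {η : ℝ} (hA : A ∈ unitaryGroup n 𝕜)
    (hdiag : (1 - η) * Fintype.card n ≤ ∑ k, ‖A k k‖ ^ 2) :
    ∑ k, ∑ l ∈ univ.erase k, ‖A l k‖ ^ 2 ≤ Fintype.card n * η := by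
  simp only [sum_erase_eq_sub (mem_univ _), sum_norm_sq_col_eq_one hA, sum_sub_distrib,
    sum_const, card_univ, nsmul_one]
  linarith

end Matrix

namespace QFT

variable (N : ℕ) [NeZero N]

lemma apply_eq_stdAddChar (j k : ZMod N) :
    QFT N j k = ZMod.stdAddChar (j * k) / (Real.sqrt N : ℂ) := by
  have hjk : j * k = ((j.val * k.val : ℕ) : ZMod N) := by simp
  rw [QFT, hjk, ZMod.stdAddChar_apply, ZMod.toCircle_natCast]
  push_cast
  ring_nf

lemma mem_unitaryGroup : QFT N ∈ unitaryGroup (ZMod N) ℂ := by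
  have hN : (Real.sqrt N : ℂ) * Real.sqrt N = N := by
    rw [← Complex.ofReal_mul, Real.mul_self_sqrt (Nat.cast_nonneg N), Complex.ofReal_natCast]
  rw [mem_unitaryGroup_iff', star_eq_conjTranspose]
  ext k l
  simp only [mul_apply, conjTranspose_apply, apply_eq_stdAddChar, star_div₀,
    Complex.star_def, Complex.conj_ofReal, ← AddChar.map_neg_eq_conj, div_mul_div_comm,
    ← AddChar.map_add_eq_mul, hN, ← sum_div, ← mul_neg, ← mul_add,
    AddChar.sum_mulShift _ (ZMod.isPrimitive_stdAddChar N), neg_add_eq_sub, sub_eq_zero,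
    one_apply, eq_comm (a := l), ZMod.card]
  split_ifs <;> simp [NeZero.ne N]

end QFT

theorem diagonal_product_close_general (N : ℕ) [NeZero N] (η1 η2 η3 : ℝ)
    (C P : Matrix (ZMod N) (ZMod N) ℂ)
    (hC : Cᴴ * C = 1) (hP : Pᴴ * P = 1)
    (hS1 : (1 / N : ℝ) * ∑ k : ZMod N, ‖(C * QFT N) k k‖ ^ 2 ≥ 1 - η1)
    (hT2 : (1 / N : ℝ) * ∑ k : ZMod N, ‖((QFT N)ᴴ * P) k k‖ ^ 2 ≥ 1 - η2)
    (hCP : ‖(C * P).trace / (N : ℂ)‖ ≥ 1 - η3) :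
    ‖((1 / N : ℂ) *
        ∑ k : ZMod N, ((QFT N)ᴴ * P) k k * (C * QFT N) k k)‖
      ≥ 1 - (η1 + η2 + η3) := by
  have hN : (0 : ℝ) < N := Nat.cast_pos.mpr (Nat.pos_of_neZero N)
  have hF := QFT.mem_unitaryGroup N
  set A := C * QFT N
  set B := (QFT N)ᴴ * P
  have hA : A ∈ unitaryGroup (ZMod N) ℂ := mul_mem (mem_unitaryGroup_iff'.mpr hC) hF
  have hB : B ∈ unitaryGroup (ZMod N) ℂ :=
    mul_mem (Unitary.star_mem hF) (mem_unitaryGroup_iff'.mpr hP)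
  have hCP_eq : C * P = A * B := by
    rw [show A * B = C * (QFT N * (QFT N)ᴴ) * P by simp only [A, B, Matrix.mul_assoc],
      ← star_eq_conjTranspose, Unitary.mul_star_self_of_mem hF, Matrix.mul_one]
  have hoffA := sum_sum_erase_norm_sq_row_le (η := η1) hA (by
    rwa [ZMod.card, ← le_div_iff₀ hN, ← one_div_mul_eq_div])
  have hoffB := sum_sum_erase_norm_sq_col_le (η := η2) hB (by
    rwa [ZMod.card, ← le_div_iff₀ hN, ← one_div_mul_eq_div])
  have hoffA0 : 0 ≤ ∑ k, ∑ l ∈ univ.erase k, ‖A k l‖ ^ 2 := by positivity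
  have hoffB0 : 0 ≤ ∑ k, ∑ l ∈ univ.erase k, ‖B l k‖ ^ 2 := by positivity
  have hdiff := norm_trace_mul_sub_sum_diag_mul_le A B
  have htri := norm_le_insert' (A * B).trace (∑ k, A k k * B k k)
  rw [hCP_eq, norm_div, Complex.norm_natCast, ge_iff_le, le_div_iff₀ hN] at hCP
  rw [norm_mul, one_div, norm_inv, Complex.norm_natCast, inv_mul_eq_div, ge_iff_le,
    le_div_iff₀ hN]
  simp only [mul_comm (B _ _)]
  rw [ZMod.card] at hoffA hoffB
  linarith

/-- Lemma 6.3: for unitaries `C ∈ S1(η1)` and `P ∈ T2(η2)` with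
`|Tr(C·P)/N| ≥ 1 − η3`, one has
`|E_k[⟨f_k| P |e_k⟩·⟨e_k| C |f_k⟩]| ≥ 1 − (η1 + η2 + η3)`. -/
theorem diagonal_product_close (N : ℕ) [NeZero N] (η1 η2 η3 : ℝ)
    (hη1 : η1 ∈ Set.Icc (0 : ℝ) 1) (hη2 : η2 ∈ Set.Icc (0 : ℝ) 1)
    (hη3 : η3 ∈ Set.Icc (0 : ℝ) 1)
    (C P : Matrix (ZMod N) (ZMod N) ℂ)
    (hC : Cᴴ * C = 1) (hP : Pᴴ * P = 1)
    (hS1 : (1 / N : ℝ) * ∑ k : ZMod N, ‖(C * QFT N) k k‖ ^ 2 ≥ 1 - η1)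
    (hT2 : (1 / N : ℝ) * ∑ k : ZMod N, ‖((QFT N)ᴴ * P) k k‖ ^ 2 ≥ 1 - η2)
    (hCP : ‖(C * P).trace / (N : ℂ)‖ ≥ 1 - η3) :
    ‖((1 / N : ℂ) *
        ∑ k : ZMod N, ((QFT N)ᴴ * P) k k * (C * QFT N) k k)‖
      ≥ 1 - (η1 + η2 + η3) :=
  diagonal_product_close_general N η1 η2 η3 C P hC hP hS1 hT2 hCP
end
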